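/- arXiv:2311.10005 — 2 statements merged into one kernel-verified Lean document; each statement's English description precedes it below -/
import Mathlib

section
/- Let n ≥ 1, let w ∈ ℝ^n be a probability vector with strictly positive entries, let c ∈ ℝ^n, ρ ≥ 0, λ > 0 and η ∈ ℝ. Then for every p ∈ U_w^ρ, Σ_i p_i·c_i ≤ η + ρ·λ + λ·Σ_i w_i·( e^{(c_i − η)/λ} − 1 ). (Weak duality for the KL-constrained inner maximization of the robust tuning problem.) -/
/-!
Fenchel–Young for `φ(t) = t log t - t + 1` and its conjugate `φ*(s) = e^s - 1` gives
`t s ≤ φ(t) + φ*(s)`; it is the nonnegativity of `φ` at `t e^{-s}`, scaled by `e^s`.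
Applied to `t = p_i / w_i`, `s = (c_i - η) / λ`, weighted by `w_i` and summed, the `φ`-terms
add up to the KL divergence of `p` from `w`, which is at most `ρ`; multiplying by `λ` and
using `Σ p_i = 1` gives the bound.
-/

open Real InformationTheory Finset

lemma mul_le_klFun_add_exp_sub_one {t : ℝ} (ht : 0 ≤ t) (s : ℝ) :
    t * s ≤ klFun t + (exp s - 1) := by
  rcases ht.eq_or_lt with rfl | ht
  · simp only [zero_mul, klFun_zero, add_sub_cancel]
    exact (exp_pos s).le
  have hscaled := mul_nonneg (exp_pos s).le (klFun_nonneg (mul_nonneg ht.le (exp_pos (-s)).le))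
  have hexp : exp s * exp (-s) = 1 := by rw [← exp_add, add_neg_cancel, exp_zero]
  rw [klFun_apply, log_mul ht.ne' (exp_pos _).ne', log_exp] at hscaled
  rw [klFun_apply]
  linear_combination hscaled + (t * (log t - s) - t) * hexp

lemma mul_klFun_div {p w : ℝ} (hw : w ≠ 0) : w * klFun (p / w) = p * log (p / w) + w - p := by
  rw [klFun_apply]
  field_simp

section

variable {ι : Type*} [Fintype ι]

lemma sum_mul_klFun_div {p w : ι → ℝ} (hw : ∀ i, w i ≠ 0) (hpw : ∑ i, p i = ∑ i, w i) :
    ∑ i, w i * klFun (p i / w i) = ∑ i, p i * log (p i / w i) := by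
  simp only [mul_klFun_div (hw _), sum_sub_distrib, sum_add_distrib, hpw, add_sub_cancel_right]

lemma sum_mul_le_sum_mul_log_div_add {p w : ι → ℝ} (hp : ∀ i, 0 ≤ p i) (hw : ∀ i, 0 < w i)
    (hpw : ∑ i, p i = ∑ i, w i) (s : ι → ℝ) :
    ∑ i, p i * s i ≤ ∑ i, p i * log (p i / w i) + ∑ i, w i * (exp (s i) - 1) := by
  calc ∑ i, p i * s i = ∑ i, w i * (p i / w i * s i) := by
        refine sum_congr rfl fun i _ => ?_
        field_simp [(hw i).ne']
    _ ≤ ∑ i, w i * (klFun (p i / w i) + (exp (s i) - 1)) := by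
        gcongr with i
        · exact (hw i).le
        · exact mul_le_klFun_add_exp_sub_one (div_nonneg (hp i) (hw i).le) _
    _ = ∑ i, p i * log (p i / w i) + ∑ i, w i * (exp (s i) - 1) := by
        simp only [mul_add, sum_add_distrib, sum_mul_klFun_div (fun i => (hw i).ne') hpw]

end

theorem robust_tuning_weak_duality_general (n : ℕ) (w : Fin n → ℝ)
    (hw : ∀ i, 0 < w i) (hws : ∑ i, w i = 1) (c : Fin n → ℝ) (ρ : ℝ)
    (lam η : ℝ) (hlam : 0 < lam) (p : Fin n → ℝ)
    (hp : (∀ i, 0 ≤ p i) ∧ (∑ i, p i = 1) ∧ (∑ i, p i * Real.log (p i / w i)) ≤ ρ) :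
    ∑ i, p i * c i ≤ η + ρ * lam + lam * ∑ i, w i * (Real.exp ((c i - η) / lam) - 1) := by
  obtain ⟨hp0, hp1, hkl⟩ := hp
  have hdual := sum_mul_le_sum_mul_log_div_add hp0 hw (hp1.trans hws.symm)
    fun i => (c i - η) / lam
  have hrescale : ∑ i, p i * c i = η + lam * ∑ i, p i * ((c i - η) / lam) := by
    have hterm : ∀ i, lam * (p i * ((c i - η) / lam)) = p i * c i - η * p i := fun i => by
      field_simp
    rw [mul_sum, sum_congr rfl fun i _ => hterm i, sum_sub_distrib, ← mul_sum, hp1]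
    ring
  calc ∑ i, p i * c i = η + lam * ∑ i, p i * ((c i - η) / lam) := hrescale
    _ ≤ η + lam * (ρ + ∑ i, w i * (exp ((c i - η) / lam) - 1)) := by gcongr; linarith
    _ = η + ρ * lam + lam * ∑ i, w i * (exp ((c i - η) / lam) - 1) := by ring

/-- Weak duality for the KL-constrained inner maximization of the robust tuning
problem: for every `p` in the uncertainty region `U_w^ρ`, every `λ > 0` and `η`,
`Σ_i p_i·c_i ≤ η + ρ·λ + λ·Σ_i w_i·(e^{(c_i - η)/λ} - 1)`. -/
theorem robust_tuning_weak_duality (n : ℕ) (hn : 1 ≤ n) (w : Fin n → ℝ)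
    (hw : ∀ i, 0 < w i) (hws : ∑ i, w i = 1) (c : Fin n → ℝ) (ρ : ℝ) (hρ : 0 ≤ ρ)
    (lam η : ℝ) (hlam : 0 < lam) (p : Fin n → ℝ)
    (hp : (∀ i, 0 ≤ p i) ∧ (∑ i, p i = 1) ∧ (∑ i, p i * Real.log (p i / w i)) ≤ ρ) :
    ∑ i, p i * c i ≤ η + ρ * lam + lam * ∑ i, w i * (Real.exp ((c i - η) / lam) - 1) :=
  robust_tuning_weak_duality_general n w hw hws c ρ lam η hlam p hp
end

section
/- Let n ≥ 1, let w ∈ ℝ^n be a probability vector with strictly positive entries, let c ∈ ℝ^n, ρ > 0 and β ∈ ℝ. Then Σ_i p_i·c_i ≤ β holds for every p ∈ U_w^ρ if and only if inf { η + ρ·λ + λ·Σ_i w_i·( e^{(c_i − η)/λ} − 1 ) : λ > 0, η ∈ ℝ } ≤ β. In particular, an LSM configuration with cost vector c is feasible for the epigraph reformulation of the robust tuning problem at level β exactly when the minimum of the dual objective g(λ, η) is at most β. -/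
open Real Finset

/-!
Weak duality is the Fenchel–Young inequality `p t ≤ p log (p / w) - p + w eᵗ`, summed with
`t = (cᵢ - η) / λ`. For the converse, let `p⁽ˢ⁾ᵢ = wᵢ e^{s cᵢ} / Z(s)` be the Gibbs distributions.
At `λ = s⁻¹, η = λ log Z(s)` the dual objective equals `E_{p⁽ˢ⁾}[c] + λ (ρ - KL(p⁽ˢ⁾ ‖ w))`, and
`s ↦ KL(p⁽ˢ⁾ ‖ w)` is continuous and vanishes at `s = 0`. Either it reaches `ρ` at some `s > 0`,
where the dual value is a primal value, or it stays below `ρ` and letting `s → ∞` pushes the dual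
value down to the primal bound.
-/

variable {ι : Type*} [Fintype ι]

noncomputable def relEntropy (p w : ι → ℝ) : ℝ := ∑ i, p i * log (p i / w i)

noncomputable def dualObjective (w c : ι → ℝ) (ρ lam η : ℝ) : ℝ :=
  η + ρ * lam + lam * ∑ i, w i * (exp ((c i - η) / lam) - 1)

lemma mul_le_mul_log_div_sub_add_mul_exp {w p : ℝ} (hw : 0 < w) (hp : 0 ≤ p) (t : ℝ) :
    p * t ≤ p * log (p / w) - p + w * exp t := by
  rcases hp.eq_or_lt with rfl | hp
  · simp only [zero_mul, zero_div, log_zero, sub_zero, zero_add]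
    positivity
  have h := add_one_le_exp (t - log (p / w))
  rw [exp_sub, exp_log (div_pos hp hw), div_div_eq_mul_div] at h
  have h' := mul_le_mul_of_nonneg_left h hp.le
  rw [mul_div_cancel₀ _ hp.ne'] at h'
  linarith

lemma sum_mul_le_relEntropy_add {p w : ι → ℝ} (hp : ∀ i, 0 ≤ p i) (hw : ∀ i, 0 < w i)
    (hpw : ∑ i, p i = ∑ i, w i) (t : ι → ℝ) :
    ∑ i, p i * t i ≤ relEntropy p w + ∑ i, w i * (exp (t i) - 1) := by
  have h := sum_le_sum fun i (_ : i ∈ univ) =>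
    mul_le_mul_log_div_sub_add_mul_exp (hw i) (hp i) (t i)
  simp only [sum_add_distrib, sum_sub_distrib, mul_sub, mul_one] at h ⊢
  rw [relEntropy, ← hpw]
  linarith

lemma relEntropy_nonneg {p w : ι → ℝ} (hp : ∀ i, 0 ≤ p i) (hw : ∀ i, 0 < w i)
    (hpw : ∑ i, p i = ∑ i, w i) : 0 ≤ relEntropy p w := by
  simpa using sum_mul_le_relEntropy_add hp hw hpw 0

lemma relEntropy_self {w : ι → ℝ} (hw : ∀ i, 0 < w i) : relEntropy w w = 0 := by
  simp [relEntropy, div_self (hw _).ne']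

lemma sum_mul_le_dualObjective {p w : ι → ℝ} (hp : ∀ i, 0 ≤ p i) (hp1 : ∑ i, p i = 1)
    (hw : ∀ i, 0 < w i) (hw1 : ∑ i, w i = 1) {ρ : ℝ} (hpρ : relEntropy p w ≤ ρ) (c : ι → ℝ)
    {lam : ℝ} (hlam : 0 < lam) (η : ℝ) :
    ∑ i, p i * c i ≤ dualObjective w c ρ lam η := by
  have h := sum_mul_le_relEntropy_add hp hw (hp1.trans hw1.symm) fun i => (c i - η) / lam
  have hscale : ∑ i, p i * ((c i - η) / lam) = (∑ i, p i * c i - η) / lam := by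
    simp only [mul_div_assoc', ← sum_div, mul_sub, sum_sub_distrib, ← sum_mul, hp1, one_mul]
  rw [hscale, div_le_iff₀ hlam] at h
  have hρlam := mul_le_mul_of_nonneg_right hpρ hlam.le
  rw [dualObjective]
  linarith

section Gibbs

variable (w c : ι → ℝ)

noncomputable def partitionFn (s : ℝ) : ℝ := ∑ i, w i * exp (s * c i)

noncomputable def gibbs (s : ℝ) (i : ι) : ℝ := w i * exp (s * c i) / partitionFn w c s

variable {w}

lemma partitionFn_pos [Nonempty ι] (hw : ∀ i, 0 < w i) (s : ℝ) : 0 < partitionFn w c s :=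
  sum_pos (fun i _ => by have := hw i; positivity) univ_nonempty

lemma gibbs_nonneg [Nonempty ι] (hw : ∀ i, 0 < w i) (s : ℝ) (i : ι) : 0 ≤ gibbs w c s i := by
  have := hw i; have := partitionFn_pos c hw s; unfold gibbs; positivity

lemma sum_gibbs [Nonempty ι] (hw : ∀ i, 0 < w i) (s : ℝ) : ∑ i, gibbs w c s i = 1 := by
  simp only [gibbs]
  rw [← sum_div]
  exact div_self (partitionFn_pos c hw s).ne'

lemma log_gibbs_div [Nonempty ι] (hw : ∀ i, 0 < w i) (s : ℝ) (i : ι) :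
    log (gibbs w c s i / w i) = s * c i - log (partitionFn w c s) := by
  have hZ := partitionFn_pos c hw s
  have hw' := (hw i).ne'
  rw [show gibbs w c s i / w i = exp (s * c i) / partitionFn w c s by rw [gibbs]; field_simp,
    log_div (exp_pos _).ne' hZ.ne', log_exp]

lemma relEntropy_gibbs [Nonempty ι] (hw : ∀ i, 0 < w i) (s : ℝ) :
    relEntropy (gibbs w c s) w = s * ∑ i, gibbs w c s i * c i - log (partitionFn w c s) := by
  simp only [relEntropy, log_gibbs_div c hw, mul_sub, sum_sub_distrib, ← sum_mul,
    sum_gibbs c hw, one_mul, mul_sum]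
  congr 1
  exact sum_congr rfl fun i _ => by ring

lemma gibbs_zero (hw1 : ∑ i, w i = 1) : gibbs w c 0 = w := by
  ext i
  simp [gibbs, partitionFn, hw1]

lemma continuous_relEntropy_gibbs [Nonempty ι] (hw : ∀ i, 0 < w i) :
    Continuous fun s => relEntropy (gibbs w c s) w := by
  simp only [relEntropy_gibbs c hw]
  have hZ : ∀ s, partitionFn w c s ≠ 0 := fun s => (partitionFn_pos c hw s).ne'
  simp only [gibbs, partitionFn] at hZ ⊢
  fun_prop (disch := exact hZ _)

lemma dualObjective_gibbs [Nonempty ι] (hw : ∀ i, 0 < w i) (hw1 : ∑ i, w i = 1) (ρ : ℝ)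
    {s : ℝ} (hs : 0 < s) :
    dualObjective w c ρ s⁻¹ (s⁻¹ * log (partitionFn w c s))
      = ∑ i, gibbs w c s i * c i + s⁻¹ * (ρ - relEntropy (gibbs w c s) w) := by
  have hexp : ∀ i, exp ((c i - s⁻¹ * log (partitionFn w c s)) / s⁻¹)
      = exp (s * c i) / partitionFn w c s := fun i => by
    rw [show (c i - s⁻¹ * log (partitionFn w c s)) / s⁻¹ = s * c i - log (partitionFn w c s) by
      field_simp, exp_sub, exp_log (partitionFn_pos c hw s)]
  have hsum : ∑ i, w i * (exp ((c i - s⁻¹ * log (partitionFn w c s)) / s⁻¹) - 1) = 0 := by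
    simp only [hexp, mul_sub, mul_one, sum_sub_distrib, hw1, ← mul_div_assoc]
    rw [← sum_div]
    exact sub_eq_zero.mpr (div_self (partitionFn_pos c hw s).ne')
  rw [dualObjective, hsum, relEntropy_gibbs c hw]
  field_simp
  ring

end Gibbs

lemma exists_dualObjective_le_add [Nonempty ι] {w : ι → ℝ} (hw : ∀ i, 0 < w i)
    (hw1 : ∑ i, w i = 1) (c : ι → ℝ) {ρ β : ℝ} (hρ : 0 < ρ)
    (hfeas : ∀ p : ι → ℝ, (∀ i, 0 ≤ p i) → ∑ i, p i = 1 → relEntropy p w ≤ ρ →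
      ∑ i, p i * c i ≤ β) {ε : ℝ} (hε : 0 < ε) :
    ∃ lam η, 0 < lam ∧ dualObjective w c ρ lam η ≤ β + ε := by
  have hgibbs : ∀ s, 0 < s → relEntropy (gibbs w c s) w ≤ ρ →
      dualObjective w c ρ s⁻¹ (s⁻¹ * log (partitionFn w c s))
        ≤ β + s⁻¹ * (ρ - relEntropy (gibbs w c s) w) := fun s hs hsρ => by
    rw [dualObjective_gibbs c hw hw1 ρ hs]
    gcongr
    exact hfeas _ (gibbs_nonneg c hw s) (sum_gibbs c hw s) hsρ
  have hzero : relEntropy (gibbs w c 0) w = 0 := by rw [gibbs_zero c hw1, relEntropy_self hw]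
  by_cases h : ∃ s, 0 < s ∧ ρ < relEntropy (gibbs w c s) w
  · obtain ⟨s₀, hs₀, hs₀ρ⟩ := h
    obtain ⟨s, hsIcc, hsρ : relEntropy (gibbs w c s) w = ρ⟩ := intermediate_value_Icc hs₀.le
      (continuous_relEntropy_gibbs c hw).continuousOn ⟨hzero.trans_le hρ.le, hs₀ρ.le⟩
    have hs : 0 < s := hsIcc.1.lt_of_ne <| by rintro rfl; exact hρ.ne (hzero ▸ hsρ)
    refine ⟨s⁻¹, _, inv_pos.mpr hs, (hgibbs s hs hsρ.le).trans ?_⟩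
    rw [hsρ, sub_self, mul_zero]
    linarith
  · push Not at h
    have hs : 0 < ρ / ε := div_pos hρ hε
    refine ⟨(ρ / ε)⁻¹, _, inv_pos.mpr hs, (hgibbs _ hs (h _ hs)).trans ?_⟩
    have := relEntropy_nonneg (gibbs_nonneg c hw (ρ / ε)) hw ((sum_gibbs c hw _).trans hw1.symm)
    calc β + (ρ / ε)⁻¹ * (ρ - relEntropy (gibbs w c (ρ / ε)) w) ≤ β + (ρ / ε)⁻¹ * ρ := by
          gcongr; linarith
      _ = β + ε := by field_simp

theorem robust_tuning_epigraph_feasibility_general (n : ℕ) (w : Fin n → ℝ)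
    (hw : ∀ i, 0 < w i) (hws : ∑ i, w i = 1) (c : Fin n → ℝ) (ρ : ℝ) (hρ : 0 < ρ)
    (β : ℝ) :
    (∀ p : Fin n → ℝ, (∀ i, 0 ≤ p i) → (∑ i, p i = 1) →
        (∑ i, p i * Real.log (p i / w i)) ≤ ρ → ∑ i, p i * c i ≤ β)
      ↔ sInf {x : ℝ | ∃ lam η : ℝ, 0 < lam ∧
          x = η + ρ * lam + lam * ∑ i, w i * (Real.exp ((c i - η) / lam) - 1)} ≤ β := by
  have : Nonempty (Fin n) :=
    univ_nonempty_iff.mp (nonempty_of_sum_ne_zero (hws ▸ one_ne_zero))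
  have hbdd : BddBelow {x : ℝ | ∃ lam η : ℝ, 0 < lam ∧ x = dualObjective w c ρ lam η} := by
    refine ⟨∑ i, w i * c i, ?_⟩
    rintro x ⟨lam, η, hlam, rfl⟩
    exact sum_mul_le_dualObjective (fun i => (hw i).le) hws hw hws
      ((relEntropy_self hw).trans_le hρ.le) c hlam η
  constructor
  · intro hfeas
    refine le_of_forall_pos_le_add fun ε hε => ?_
    obtain ⟨lam, η, hlam, hle⟩ := exists_dualObjective_le_add hw hws c hρ hfeas hε
    exact (csInf_le hbdd ⟨lam, η, hlam, rfl⟩).trans hle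
  · intro hinf p hp hp1 hpρ
    refine hinf.trans' (le_csInf ⟨_, 1, 0, one_pos, rfl⟩ ?_)
    rintro x ⟨lam, η, hlam, rfl⟩
    exact sum_mul_le_dualObjective hp hp1 hw hws hpρ c hlam η

/-- Epigraph feasibility for the robust tuning problem: a configuration with cost
vector `c` satisfies `Σ_i p_i·c_i ≤ β` for every `p` in the uncertainty region `U_w^ρ`
iff the infimum of the Lagrangian dual objective
`g(λ, η) = η + ρ·λ + λ·Σ_i w_i·(e^{(c_i - η)/λ} - 1)` over `λ > 0, η ∈ ℝ` is ≤ β. -/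
theorem robust_tuning_epigraph_feasibility (n : ℕ) (hn : 1 ≤ n) (w : Fin n → ℝ)
    (hw : ∀ i, 0 < w i) (hws : ∑ i, w i = 1) (c : Fin n → ℝ) (ρ : ℝ) (hρ : 0 < ρ)
    (β : ℝ) :
    (∀ p : Fin n → ℝ, (∀ i, 0 ≤ p i) → (∑ i, p i = 1) →
        (∑ i, p i * Real.log (p i / w i)) ≤ ρ → ∑ i, p i * c i ≤ β)
      ↔ sInf {x : ℝ | ∃ lam η : ℝ, 0 < lam ∧
          x = η + ρ * lam + lam * ∑ i, w i * (Real.exp ((c i - η) / lam) - 1)} ≤ β :=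
  robust_tuning_epigraph_feasibility_general n w hw hws c ρ hρ β
end
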